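/- arXiv:2001.05758 — 5 statements merged into one kernel-verified Lean document; each statement's English description precedes it below -/
import Mathlib

section
/- The full subcategory of the category of simplicial sets spanned by the non-singular simplicial sets is reflective: the (fully faithful) inclusion functor from the category of non-singular simplicial sets into SSet admits a left adjoint. -/
open CategoryTheory CategoryTheory.Limits Simplicial SSet

/-- The `i`-th vertex of an `n`-simplex `x`, i.e. `x · εᵢ`, where `εᵢ : [0] ⟶ [n]`
sends `0` to `i`. -/
def SSet.vertex (X : SSet) {n : ℕ} (x : X _⦋n⦌) (i : Fin (n + 1)) : X _⦋0⦌ :=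
  X.map (SimplexCategory.const ⦋0⦌ ⦋n⦌ i).op x

/-- A simplex is degenerate if it is obtained from a simplex of strictly lower degree
by the action of a (necessarily non-identity) epimorphism of the simplex category. -/
def SSet.IsDegenerate (X : SSet) {n : ℕ} (x : X _⦋n⦌) : Prop :=
  ∃ (m : ℕ) (_ : m < n) (σ : (⦋n⦌ : SimplexCategory) ⟶ ⦋m⦌) (y : X _⦋m⦌),
    Epi σ ∧ x = X.map σ.op y

/-- A simplicial set is non-singular if the representing map of each of its
non-degenerate simplices is a monomorphism. -/
def SSet.NonSingular (X : SSet) : Prop :=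
  ∀ (n : ℕ) (x : X _⦋n⦌), ¬ X.IsDegenerate x → Mono ((SSet.yonedaEquiv (X := X) (n := ⦋n⦌)).symm x)

/-- The relation `≈ₓ` on `Fin (n + 1)`: `i ≈ₓ k` iff there exists `j` with
`i ≤ k`, `k ≤ j` and `x·εᵢ = x·εⱼ`. -/
def SSet.approxRel (X : SSet) {n : ℕ} (x : X _⦋n⦌) (i k : Fin (n + 1)) : Prop :=
  ∃ j, i ≤ k ∧ k ≤ j ∧ X.vertex x i = X.vertex x j

/-- The equivalence relation `Rₓ` generated by `≈ₓ`. -/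
def SSet.vertexRel (X : SSet) {n : ℕ} (x : X _⦋n⦌) : Fin (n + 1) → Fin (n + 1) → Prop :=
  Relation.EqvGen (X.approxRel x)

/-!
Non-singular simplicial sets are closed under limits and under subobjects, so the general
adjoint functor theorem applies. For the solution set at `A` take the non-singular quotients
of `A`: a map `A ⟶ X` with `X` non-singular factors through its coimage, which embeds into `X`.

Closure under limits rests on vertices. In a non-singular simplicial set write a simplex as
`x = s^* y` with `s` epi and `y` non-degenerate; the vertices of `y` are pairwise distinct, so
equal vertices `xᵢ = xⱼ` with `i ≤ a < a + 1 ≤ j` force `s a = s (a + 1)`, whence `x = X.σ a z`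
and so `x = X.σ a (X.δ (a + 1) x)`. If a simplex of a limit has two equal vertices, all its
components, hence the simplex itself, satisfy this identity, so it is degenerate.
-/

universe w v₁ u₁ u

namespace CategoryTheory.FunctorToTypes

variable {C : Type u₁} [Category.{v₁} C]

structure Congruence (F : C ⥤ Type w) where
  setoid (c : C) : Setoid (F.obj c)
  map_rel {c d : C} (f : c ⟶ d) {a b : F.obj c} :
    setoid c a b → setoid d (F.map f a) (F.map f b)

namespace Congruence

variable {F G : C ⥤ Type w}

def quotient (r : Congruence F) : C ⥤ Type w where
  obj c := _root_.Quotient (r.setoid c)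
  map f := TypeCat.ofHom (Quotient.map' (F.map f) fun _ _ ↦ r.map_rel f)
  map_id c := by
    ext x
    induction x using _root_.Quotient.inductionOn
    simp [Quotient.map'_mk'']
  map_comp f g := by
    ext x
    induction x using _root_.Quotient.inductionOn
    simp [Quotient.map'_mk'']

def π (r : Congruence F) : F ⟶ r.quotient where
  app c := TypeCat.ofHom (_root_.Quotient.mk (r.setoid c))

def ker (g : F ⟶ G) : Congruence F where
  setoid c := Setoid.ker (g.app c)
  map_rel f a b hab := by
    change g.app _ (F.map f a) = g.app _ (F.map f b)
    simp only [NatTrans.naturality_apply]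
    exact congrArg _ hab

def kerLift (g : F ⟶ G) : (ker g).quotient ⟶ G where
  app c := TypeCat.ofHom (_root_.Quotient.lift (g.app c) fun _ _ ↦ id)
  naturality c d f := by
    ext x
    induction x using _root_.Quotient.inductionOn
    exact NatTrans.naturality_apply g f _

lemma π_kerLift (g : F ⟶ G) : (ker g).π ≫ kerLift g = g := rfl

instance mono_kerLift (g : F ⟶ G) : Mono (kerLift g) := by
  refine (NatTrans.mono_iff_mono_app _).mpr fun c ↦ (mono_iff_injective _).mpr fun x y ↦ ?_
  induction x, y using _root_.Quotient.inductionOn₂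
  exact fun h ↦ _root_.Quotient.sound h

end Congruence

end CategoryTheory.FunctorToTypes

namespace SSet

variable {X : SSet.{u}}

lemma isDegenerate_iff_mem_degenerate {n : ℕ} (x : X _⦋n⦌) :
    X.IsDegenerate x ↔ x ∈ X.degenerate n := by
  rw [mem_degenerate_iff]
  constructor
  · rintro ⟨m, hm, σ, y, hσ, rfl⟩
    exact ⟨m, hm, σ, hσ, y, rfl⟩
  · rintro ⟨m, hm, σ, hσ, y, rfl⟩
    exact ⟨m, hm, σ, y, hσ, rfl⟩

lemma nonSingular_iff_nonsingular : X.NonSingular ↔ X.Nonsingular := by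
  simp only [NonSingular, isDegenerate_iff_mem_degenerate]
  exact ⟨fun h ↦ ⟨fun x ↦ h _ x.1 x.2⟩, fun h n x hx ↦ Nonsingular.mono' x hx⟩

lemma vertex_map {n m : ℕ} (f : ⦋n⦌ ⟶ ⦋m⦌) (x : X _⦋m⦌) (i : Fin (n + 1)) :
    X.vertex (X.map f.op x) i = X.vertex x (f i) := by
  simp only [vertex, ← Functor.map_comp_apply, ← op_comp, SimplexCategory.const_comp]
  rfl

lemma vertex_app {Y : SSet.{u}} (g : X ⟶ Y) {n : ℕ} (x : X _⦋n⦌) (i : Fin (n + 1)) :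
    Y.vertex (g.app _ x) i = g.app _ (X.vertex x i) :=
  (NatTrans.naturality_apply g _ x).symm

lemma mono_yonedaEquiv_symm_of_injective_vertex {n : ℕ} {x : X _⦋n⦌}
    (h : Function.Injective (X.vertex x)) : Mono (yonedaEquiv.symm x) := by
  rw [NatTrans.mono_iff_mono_app]
  rintro ⟨m⟩
  induction m using SimplexCategory.rec with | _ m => ?_
  rw [mono_iff_injective]
  intro f g hfg
  obtain ⟨f, rfl⟩ := stdSimplex.objEquiv.symm.surjective f
  obtain ⟨g, rfl⟩ := stdSimplex.objEquiv.symm.surjective g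
  rw [yonedaEquiv_symm_app_objEquiv_symm, yonedaEquiv_symm_app_objEquiv_symm] at hfg
  congr 1
  ext t : 3
  have hv := congrArg (fun y ↦ X.vertex y t) hfg
  simp only [vertex_map] at hv
  exact h hv

lemma injective_vertex [X.Nonsingular] {n : ℕ} {x : X _⦋n⦌} (hx : x ∈ X.nonDegenerate n) :
    Function.Injective (X.vertex x) := fun i j hij ↦ by
  simpa using congrArg (fun f ↦ f.toOrderHom 0) (Nonsingular.injective_map x hx hij)

lemma mem_range_σ_of_vertex_eq [X.Nonsingular] {n : ℕ} (x : X _⦋n + 1⦌) {i j : Fin (n + 2)}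
    {a : Fin (n + 1)} (hi : i ≤ a.castSucc) (hj : a.succ ≤ j) (h : X.vertex x i = X.vertex x j) :
    x ∈ Set.range (X.σ a) := by
  obtain ⟨m, s, _, ⟨y, hy⟩, rfl⟩ := X.exists_nonDegenerate x
  simp only [vertex_map] at h
  have hs : s i = s j := injective_vertex hy h
  have hs_a : s a.castSucc = s a.succ :=
    le_antisymm (s.toOrderHom.monotone Fin.castSucc_lt_succ.le) <| calc
      s a.succ ≤ s j := s.toOrderHom.monotone hj
      _ = s i := hs.symm
      _ ≤ s a.castSucc := s.toOrderHom.monotone hi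
  obtain ⟨s', rfl⟩ := SimplexCategory.eq_σ_comp_of_not_injective' s a hs_a
  exact ⟨X.map s'.op y, by simp [SimplicialObject.σ]⟩

lemma ext_of_isLimit {J : Type*} [Category J] {F : J ⥤ SSet.{u}} {c : Cone F} (hc : IsLimit c)
    {n : ℕ} {x y : c.pt _⦋n⦌} (h : ∀ j, (c.π.app j).app _ x = (c.π.app j).app _ y) : x = y :=
  yonedaEquiv.symm.injective (hc.hom_ext fun j ↦ by simp only [yonedaEquiv_symm_comp, h])

lemma nonsingular_of_isLimit {J : Type*} [Category J] {F : J ⥤ SSet.{u}} {c : Cone F}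
    (hc : IsLimit c) [∀ j, (F.obj j).Nonsingular] : c.pt.Nonsingular := by
  refine ⟨fun {n} ⟨x, hx⟩ ↦ mono_yonedaEquiv_symm_of_injective_vertex ?_⟩
  suffices h : ∀ p q, p < q → c.pt.vertex x p ≠ c.pt.vertex x q from fun p q hpq ↦ by
    by_contra hne
    rcases lt_or_gt_of_ne hne with hlt | hlt
    exacts [h p q hlt hpq, h q p hlt hpq.symm]
  intro p q hpq hv
  cases n with
  | zero => exact hpq.ne (Fin.subsingleton_one.elim p q)
  | succ n =>
    set a := p.castPred (Fin.ne_last_of_lt hpq)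
    have hσ : ∀ j, (c.π.app j).app _ x ∈ Set.range ((F.obj j).σ a) := fun j ↦
      mem_range_σ_of_vertex_eq _ (Fin.castSucc_castPred p _).ge
        ((Fin.succ_castPred_le_iff _).mpr hpq)
        ((vertex_app _ x p).trans ((congrArg _ hv).trans (vertex_app _ x q).symm))
    have hx_σ : c.pt.σ a (c.pt.δ a.succ x) = x := ext_of_isLimit hc fun j ↦ by
      obtain ⟨y, hy⟩ := hσ j
      dsimp only [Functor.const_obj_obj]
      rw [σ_naturality_apply, δ_naturality_apply, ← hy, δ_comp_σ_succ_apply]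
    exact hx (hx_σ ▸ σ_mem_degenerate _ _ _)

instance (J : Type u) [Category.{u} J] :
    ObjectProperty.IsClosedUnderLimitsOfShape (C := SSet.{u}) NonSingular J where
  limitsOfShape_le _ := fun ⟨h⟩ ↦
    have := fun j ↦ nonSingular_iff_nonsingular.mp (h.prop_diag_obj j)
    nonSingular_iff_nonsingular.mpr (nonsingular_of_isLimit h.isLimit)

instance : HasLimits (ObjectProperty.FullSubcategory NonSingular.{u}) :=
  ⟨fun _ _ ↦ inferInstance⟩

instance : PreservesLimits (ObjectProperty.ι NonSingular.{u}) :=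
  ⟨fun {_} _ ↦ inferInstance⟩

open FunctorToTypes in
lemma solutionSetCondition_ι_nonSingular :
    SolutionSetCondition.{u} (ObjectProperty.ι NonSingular.{u}) := fun A ↦
  ⟨{r : Congruence A // NonSingular r.quotient}, fun r ↦ ⟨_, r.2⟩, fun r ↦ r.1.π,
    fun X g ↦ ⟨⟨Congruence.ker g, nonSingular_iff_nonsingular.mpr <|
      have : ((ObjectProperty.ι NonSingular).obj X).Nonsingular :=
        nonSingular_iff_nonsingular.mp X.2
      .of_mono (Congruence.kerLift g)⟩,
      ObjectProperty.homMk (Congruence.kerLift g), Congruence.π_kerLift g⟩⟩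

end SSet

/-- The full subcategory of `SSet` spanned by the non-singular simplicial sets is
reflective: the fully faithful inclusion admits a left adjoint. -/
theorem nonsingular_reflective :
    (ObjectProperty.ι SSet.NonSingular).IsRightAdjoint :=
  isRightAdjoint_of_preservesLimits_of_solutionSetCondition _
    SSet.solutionSetCondition_ι_nonSingular
end

section
/- Let X be a simplicial set and x an n-simplex of X. Then the equivalence relation Rₓ on Fin (n+1) generated by ≈ₓ has the following interval property: if Rₓ relates i and j and if i ≤ k ≤ j in Fin (n+1), then Rₓ relates i and k. -/
/-!
The relation `≈ₓ` is already closed under passing to smaller right endpoints (keep the same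
witness `j`). This interval property survives taking the generated equivalence relation, since
in a transitivity step `a ~ b ~ d` every point of `[[a, d]]` lies in `[[a, b]]` or in `[[b, d]]`.
-/

open CategoryTheory CategoryTheory.Limits Simplicial SSet

theorem Relation.EqvGen.of_mem_uIcc {α : Type*} [LinearOrder α] {r : α → α → Prop}
    (hr : ∀ a b c, r a b → c ∈ Set.uIcc a b → r a c) {a b c : α}
    (hab : Relation.EqvGen r a b) (hc : c ∈ Set.uIcc a b) : Relation.EqvGen r a c := by
  induction hab generalizing c with
  | rel a b hab => exact .rel _ _ (hr a b c hab hc)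
  | refl a =>
    obtain rfl : c = a := by simpa using hc
    exact .refl c
  | symm a b hab ih =>
    rw [Set.uIcc_comm] at hc
    exact .trans _ _ _ (.symm _ _ hab) (ih hc)
  | trans a b d hab _ ih₁ ih₂ =>
    rcases Set.uIcc_subset_uIcc_union_uIcc hc with hc | hc
    · exact ih₁ hc
    · exact .trans _ _ _ hab (ih₂ hc)

theorem SSet.approxRel_of_mem_uIcc (X : SSet) {n : ℕ} (x : X _⦋n⦌) (i k l : Fin (n + 1))
    (h : X.approxRel x i k) (hl : l ∈ Set.uIcc i k) : X.approxRel x i l := by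
  obtain ⟨j, hik, hkj, hv⟩ := h
  rw [Set.uIcc_of_le hik] at hl
  exact ⟨j, hl.1, hl.2.trans hkj, hv⟩

/-- The equivalence relation `Rₓ` generated by `≈ₓ` has the interval property. -/
theorem vertexRel_interval (X : SSet) {n : ℕ} (x : X _⦋n⦌) (i j k : Fin (n + 1))
    (hij : X.vertexRel x i j) (hik : i ≤ k) (hkj : k ≤ j) :
    X.vertexRel x i k :=
  Relation.EqvGen.of_mem_uIcc (X.approxRel_of_mem_uIcc x) hij (Set.mem_uIcc_of_le hik hkj)
end

section
/- Let X be a simplicial set and x an n-simplex of X. The simplicial map Δ[n] ⟶ X representing x (corresponding to x under the Yoneda equivalence) is a monomorphism if and only if the vertices of x are pairwise distinct, i.e. the function Fin (n+1) → X₀ given by i ↦ x·εᵢ is injective. -/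
open CategoryTheory CategoryTheory.Limits Simplicial SSet

/-! An `m`-simplex `y` of `Δ[n]` is a monotone map determined by its values `y i`, and the
`i`-th vertex of its image in `X` is the `(y i)`-th vertex of `x`; so distinct vertices make the
image determine `y`. Conversely, the vertices of `x` are the images of the `0`-simplices of `Δ[n]`. -/

namespace SSet

variable {X : SSet} {n : ℕ} (x : X _⦋n⦌)

lemma yonedaEquiv_symm_app_comp_obj₀Equiv_symm :
    (yonedaEquiv.symm x).app _ ∘ stdSimplex.obj₀Equiv.symm = X.vertex x :=
  rfl

lemma vertex_yonedaEquiv_symm_app {m : ℕ} (y : Δ[n] _⦋m⦌) (i : Fin (m + 1)) :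
    X.vertex ((yonedaEquiv.symm x).app _ y) i = X.vertex x (y i) := by
  change X.map _ (X.map _ x) = X.map _ x
  rw [← Functor.map_comp_apply, ← op_comp, SimplexCategory.const_comp]
  rfl

end SSet

/-- The representing map of a simplex is a monomorphism iff its vertices are
pairwise distinct. -/
theorem mono_representing_iff_vertices_injective (X : SSet) {n : ℕ} (x : X _⦋n⦌) :
    Mono ((SSet.yonedaEquiv (X := X) (n := ⦋n⦌)).symm x) ↔ Function.Injective (X.vertex x) := by
  simp only [NatTrans.mono_iff_mono_app, mono_iff_injective]
  constructor
  · intro h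
    rw [← yonedaEquiv_symm_app_comp_obj₀Equiv_symm]
    exact (h _).comp stdSimplex.obj₀Equiv.symm.injective
  · rintro h ⟨⟨m⟩⟩ y z hyz
    ext i : 1
    apply h
    rw [← vertex_yonedaEquiv_symm_app, hyz, vertex_yonedaEquiv_symm_app]
end

section
/- Let 0 < k < n. Let μ : [k] ⟶ [n] be the monomorphism of the simplex category with μ(i) = i, and let X be the pushout in SSet of the induced map Δ[k] ⟶ Δ[n] along the unique map Δ[k] ⟶ Δ[0], with coprojection x̄ : Δ[n] ⟶ X. Let ρ : [n] ⟶ [n−k] be the epimorphism of the simplex category with ρ(i) = 0 for i ≤ k and ρ(i) = i − k for i ≥ k, and let Y be the pushout in SSet of the induced map Δ[n] ⟶ Δ[n−k] along x̄. Then the coprojection Δ[n−k] ⟶ Y is an isomorphism; consequently every simplicial map from X to a non-singular simplicial set factors uniquely through the coprojection X ⟶ Y ≅ Δ[n−k] (i.e., the desingularization of X is Δ[n−k]). -/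
/-!
Write `x̄ : Δ[n] ⟶ X` and `t : X ⟶ Δ[n-k]` for the map induced by `ρ`, so that `x̄ ≫ t = ρ`. Since
`x̄` is a pushout of the epimorphism `Δ[k] ⟶ Δ[0]`, it is an epimorphism, and this alone makes the
coprojection `Δ[n-k] ⟶ Y` invertible.

A map `g : Δ[n] ⟶ A` into a non-singular `A` is `σ^* y` with `σ` epi and `y` non-degenerate; as
`y : Δ[p] ⟶ A` is mono, the vertices of `y` are pairwise distinct, so `φ^* g = ψ^* g` as soon as
`g` takes the same value at the vertices `φ i` and `ψ i` for every `i`. For `g = x̄ ≫ f` the vertices `0, …, k` agree, so `g` is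
constant on the fibres of `ρ`, hence fixed by `ρ` followed by a section of `ρ`: it factors through
`ρ`. The factorization through `X ⟶ Y` is then unique because that map is a pushout of the split
epimorphism `ρ`.
-/

open CategoryTheory CategoryTheory.Limits Simplicial SSet

instance Δ0_subsingleton (m : SimplexCategoryᵒᵖ) : Subsingleton (Δ[0].obj m) :=
  SSet.stdSimplex.objEquiv.subsingleton

/-- The unique map to the standard `0`-simplex, which is terminal in `SSet`. -/
def SSet.toPt (Y : SSet.{0}) : Y ⟶ Δ[0] where
  app m := ↾fun _ => SSet.stdSimplex.const 0 0 m
  naturality _ _ _ := by ext; exact Subsingleton.elim _ _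

universe u

namespace CategoryTheory.Limits.pushout

variable {C : Type*} [Category C] {A B D W : C} {f : A ⟶ B} {g : A ⟶ D} [HasPushout f g]

theorem isIso_inl_of_fac [Epi g] (t : D ⟶ B) (w : g ≫ t = f) : IsIso (pushout.inl f g) :=
  ⟨pushout.desc (𝟙 B) t (by simp [w]), pushout.inl_desc _ _ _,
    pushout.hom_ext (by rw [pushout.inl_desc_assoc, Category.id_comp, Category.comp_id]) (by
      rw [← cancel_epi g, pushout.inr_desc_assoc, reassoc_of% w, condition, Category.comp_id])⟩

theorem existsUnique_inr_comp_eq [Epi f] {φ : D ⟶ W} {h : B ⟶ W} (w : f ≫ h = g ≫ φ) :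
    ∃! ψ : pushout f g ⟶ W, φ = pushout.inr f g ≫ ψ :=
  ⟨pushout.desc h φ w, (pushout.inr_desc _ _ _).symm, fun ψ hψ => by
    rw [← cancel_epi (pushout.inr f g), pushout.inr_desc, hψ]⟩

end CategoryTheory.Limits.pushout

theorem SimplexCategory.epi_of_toOrderHom_val_eq_sub {k n : ℕ} (hkn : k ≤ n)
    {ρ : (⦋n⦌ : SimplexCategory) ⟶ ⦋n - k⦌}
    (hρ : ∀ i : Fin (n + 1), (ρ.toOrderHom i : ℕ) = i - k) : Epi ρ :=
  epi_iff_surjective.2 fun j =>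
    ⟨⟨j + k, show (j : ℕ) + k < n + 1 by have : (j : ℕ) < n - k + 1 := j.isLt; omega⟩,
      Fin.ext (by rw [hρ]; simp)⟩

namespace SSet

theorem NonSingular.nonsingular {X : SSet.{u}} (hX : X.NonSingular) : X.Nonsingular where
  mono := fun ⟨x, hx⟩ => hX _ x fun ⟨m, hm, σ, y, _, hxy⟩ => hx ⟨m, hm, σ, y, hxy.symm⟩

instance epi_toPt (k : ℕ) : Epi (toPt Δ[k]) :=
  (IsSplitEpi.mk' ⟨SSet.stdSimplex.map (SimplexCategory.const ⦋0⦌ ⦋k⦌ 0),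
    stdSimplex.isTerminalObj₀.hom_ext _ _⟩).epi

instance stdSimplex.epi_map {n m : ℕ} (ρ : (⦋n⦌ : SimplexCategory) ⟶ ⦋m⦌) [Epi ρ] :
    Epi (stdSimplex.{u}.map ρ) :=
  ((isSplitEpi_of_epi ρ).exists_splitEpi.some.map stdSimplex).epi

namespace Nonsingular

variable {X : SSet.{u}} [X.Nonsingular] {m n : ℕ}

theorem stdSimplex_map_comp_eq_of_forall_const (g : Δ[n] ⟶ X) (φ ψ : ⦋m⦌ ⟶ ⦋n⦌)
    (h : ∀ i, SSet.stdSimplex.map (SimplexCategory.const ⦋0⦌ ⦋n⦌ (φ.toOrderHom i)) ≫ g =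
      SSet.stdSimplex.map (SimplexCategory.const ⦋0⦌ ⦋n⦌ (ψ.toOrderHom i)) ≫ g) :
    SSet.stdSimplex.map φ ≫ g = SSet.stdSimplex.map ψ ≫ g := by
  obtain ⟨p, σ, _, ⟨y, hy⟩, hgy⟩ := X.exists_nonDegenerate (yonedaEquiv g)
  have hg : g = SSet.stdSimplex.map σ ≫ yonedaEquiv.symm y := by
    rw [yonedaEquiv_symm_naturality_left, ← hgy, Equiv.symm_apply_apply]
  have := mono' y hy
  have hσ : φ ≫ σ = ψ ≫ σ := by
    ext i : 3
    have hi := h i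
    rw [hg, ← SSet.stdSimplex.map_comp_assoc, ← SSet.stdSimplex.map_comp_assoc, cancel_mono] at hi
    simpa using congr_arg (fun f => f.toOrderHom 0) (SSet.stdSimplex.map_injective hi)
  rw [hg, ← SSet.stdSimplex.map_comp_assoc, ← SSet.stdSimplex.map_comp_assoc, hσ]

theorem exists_stdSimplex_map_comp_eq (ρ : ⦋n⦌ ⟶ ⦋m⦌) [Epi ρ] (g : Δ[n] ⟶ X)
    (h : ∀ i j, ρ.toOrderHom i = ρ.toOrderHom j →
      SSet.stdSimplex.map (SimplexCategory.const ⦋0⦌ ⦋n⦌ i) ≫ g =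
        SSet.stdSimplex.map (SimplexCategory.const ⦋0⦌ ⦋n⦌ j) ≫ g) :
    ∃ g' : Δ[m] ⟶ X, SSet.stdSimplex.map ρ ≫ g' = g := by
  have := isSplitEpi_of_epi ρ
  refine ⟨SSet.stdSimplex.map (section_ ρ) ≫ g, ?_⟩
  have hρ i : ρ.toOrderHom ((section_ ρ).toOrderHom (ρ.toOrderHom i)) = ρ.toOrderHom i := by
    change (section_ ρ ≫ ρ).toOrderHom _ = _
    rw [IsSplitEpi.id]
    rfl
  rw [← SSet.stdSimplex.map_comp_assoc,
    stdSimplex_map_comp_eq_of_forall_const g (ρ ≫ section_ ρ) (𝟙 _) fun i => h _ _ (hρ i),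
    CategoryTheory.Functor.map_id (self := SSet.stdSimplex), Category.id_comp]

end Nonsingular

variable {k n : ℕ} {μ : (⦋k⦌ : SimplexCategory) ⟶ ⦋n⦌} {ρ : (⦋n⦌ : SimplexCategory) ⟶ ⦋n - k⦌}

theorem stdSimplex_map_comp_eq_toPt_comp
    (hμ : ∀ i : Fin (k + 1), (μ.toOrderHom i : ℕ) = i)
    (hρ : ∀ i : Fin (n + 1), (ρ.toOrderHom i : ℕ) = i - k) :
    SSet.stdSimplex.map μ ≫ SSet.stdSimplex.map ρ =
      toPt Δ[k] ≫ SSet.stdSimplex.map (SimplexCategory.const ⦋0⦌ ⦋n - k⦌ 0) := by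
  have hμρ : μ ≫ ρ = SimplexCategory.const ⦋k⦌ ⦋n - k⦌ 0 := by
    ext i : 3
    apply Fin.ext
    have : (i : ℕ) < k + 1 := i.isLt
    simp only [SimplexCategory.comp_toOrderHom, OrderHom.comp_coe, Function.comp_apply,
      SimplexCategory.const_apply, Fin.val_zero, hρ, hμ]
    omega
  rw [← SSet.stdSimplex.map_comp, hμρ, SimplexCategory.const_fac_thru_zero,
    SSet.stdSimplex.map_comp, stdSimplex.isTerminalObj₀.hom_ext
      (SSet.stdSimplex.map (SimplexCategory.const ⦋k⦌ ⦋0⦌ 0)) (toPt Δ[k])]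

theorem stdSimplex_map_const_comp_eq_of_toOrderHom_eq {A : SSet.{0}}
    (hμ : ∀ i : Fin (k + 1), (μ.toOrderHom i : ℕ) = i)
    (hρ : ∀ i : Fin (n + 1), (ρ.toOrderHom i : ℕ) = i - k)
    {g : Δ[n] ⟶ A} {c : Δ[0] ⟶ A} (hg : SSet.stdSimplex.map μ ≫ g = toPt Δ[k] ≫ c)
    {i j : Fin (n + 1)} (hij : ρ.toOrderHom i = ρ.toOrderHom j) :
    SSet.stdSimplex.map (SimplexCategory.const ⦋0⦌ ⦋n⦌ i) ≫ g =
      SSet.stdSimplex.map (SimplexCategory.const ⦋0⦌ ⦋n⦌ j) ≫ g := by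
  have hfront (l : Fin (n + 1)) (hl : (l : ℕ) ≤ k) :
      SSet.stdSimplex.map (SimplexCategory.const ⦋0⦌ ⦋n⦌ l) ≫ g = c := by
    have hl' : SimplexCategory.const ⦋0⦌ ⦋n⦌ l =
        SimplexCategory.const ⦋0⦌ ⦋k⦌ ⟨l, Nat.lt_succ_of_le hl⟩ ≫ μ := by
      rw [SimplexCategory.const_comp]
      exact congrArg _ (Fin.ext (hμ _)).symm
    rw [hl', SSet.stdSimplex.map_comp_assoc, hg, ← Category.assoc,
      stdSimplex.isTerminalObj₀.hom_ext (_ ≫ toPt _) (𝟙 _), Category.id_comp]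
  have hij' : (i : ℕ) - k = j - k := by rw [← hρ, ← hρ, hij]
  by_cases hi : (i : ℕ) ≤ k
  · rw [hfront i hi, hfront j (by omega)]
  · rw [Fin.ext (by omega : (i : ℕ) = j)]

end SSet

theorem desingularization_collapsed_simplex_general (k n : ℕ) (hkn : k < n)
    (μ : (⦋k⦌ : SimplexCategory) ⟶ ⦋n⦌)
    (hμ : ∀ i : Fin (k + 1), (μ.toOrderHom i : ℕ) = (i : ℕ))
    (ρ : (⦋n⦌ : SimplexCategory) ⟶ ⦋n - k⦌)
    (hρ : ∀ i : Fin (n + 1), (ρ.toOrderHom i : ℕ) = (i : ℕ) - k) :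
    IsIso (pushout.inl (SSet.stdSimplex.map ρ)
      (pushout.inl (SSet.stdSimplex.map μ) (SSet.toPt Δ[k]))) ∧
    ∀ (A : SSet.{0}), A.NonSingular →
      ∀ f : pushout (SSet.stdSimplex.map μ) (SSet.toPt Δ[k]) ⟶ A,
        ∃! fbar : pushout (SSet.stdSimplex.map ρ)
            (pushout.inl (SSet.stdSimplex.map μ) (SSet.toPt Δ[k])) ⟶ A,
          f = pushout.inr (SSet.stdSimplex.map ρ)
            (pushout.inl (SSet.stdSimplex.map μ) (SSet.toPt Δ[k])) ≫ fbar := by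
  have := SimplexCategory.epi_of_toOrderHom_val_eq_sub hkn.le hρ
  refine ⟨pushout.isIso_inl_of_fac
    (pushout.desc _ _ (SSet.stdSimplex_map_comp_eq_toPt_comp hμ hρ)) (pushout.inl_desc _ _ _),
    fun A hA f => ?_⟩
  have := hA.nonsingular
  obtain ⟨h, hh⟩ := SSet.Nonsingular.exists_stdSimplex_map_comp_eq ρ (pushout.inl _ _ ≫ f)
    fun i j hij => SSet.stdSimplex_map_const_comp_eq_of_toOrderHom_eq hμ hρ
      (c := pushout.inr _ _ ≫ f) (by rw [pushout.condition_assoc]) hij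
  exact pushout.existsUnique_inr_comp_eq hh

/-- Let `0 < k < n`, let `X` be the pushout of `Δ[k] ⟶ Δ[n]` (induced by the front
face `μ : [k] ⟶ [n]`, `μ i = i`) along `Δ[k] ⟶ Δ[0]`, with coprojection
`x̄ : Δ[n] ⟶ X`, and let `Y` be the pushout of the map `Δ[n] ⟶ Δ[n-k]` induced by
`ρ : [n] ⟶ [n-k]` (`ρ i = i - k`, truncated subtraction) along `x̄`. Then the
coprojection `Δ[n-k] ⟶ Y` is an isomorphism and every map from `X` to a
non-singular simplicial set factors uniquely through `X ⟶ Y`: the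
desingularization of `X` is `Δ[n-k]`. -/
theorem desingularization_collapsed_simplex (k n : ℕ) (h0 : 0 < k) (hkn : k < n)
    (μ : (⦋k⦌ : SimplexCategory) ⟶ ⦋n⦌)
    (hμ : ∀ i : Fin (k + 1), (μ.toOrderHom i : ℕ) = (i : ℕ))
    (ρ : (⦋n⦌ : SimplexCategory) ⟶ ⦋n - k⦌)
    (hρ : ∀ i : Fin (n + 1), (ρ.toOrderHom i : ℕ) = (i : ℕ) - k) :
    IsIso (pushout.inl (SSet.stdSimplex.map ρ)
      (pushout.inl (SSet.stdSimplex.map μ) (SSet.toPt Δ[k]))) ∧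
    ∀ (A : SSet.{0}), A.NonSingular →
      ∀ f : pushout (SSet.stdSimplex.map μ) (SSet.toPt Δ[k]) ⟶ A,
        ∃! fbar : pushout (SSet.stdSimplex.map ρ)
            (pushout.inl (SSet.stdSimplex.map μ) (SSet.toPt Δ[k])) ⟶ A,
          f = pushout.inr (SSet.stdSimplex.map ρ)
            (pushout.inl (SSet.stdSimplex.map μ) (SSet.toPt Δ[k])) ≫ fbar :=
  desingularization_collapsed_simplex_general k n hkn μ hμ ρ hρ
end

section
/- Let X be a simplicial set and x an n-simplex of X. The equivalence relation Rₓ on Fin (n+1) generated by ≈ₓ is the equality relation if and only if the vertices of x are pairwise distinct (i.e. i ↦ x·εᵢ is injective). Consequently, any enforcer of x is an isomorphism of the simplex category if and only if the representing map of x is a monomorphism. -/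
open CategoryTheory CategoryTheory.Limits Simplicial SSet

/-!
If the vertices of `x` are distinct, then `x·εᵢ = x·εⱼ` with `i ≤ k ≤ j` forces `i = j = k`, so
`≈ₓ`, and hence `Rₓ`, is equality; conversely two equal vertices `x·εᵢ = x·εⱼ` with `i ≤ j`
give `i ≈ₓ j`. A simplex `Δ[m] ⟶ Δ[n]` is determined by its vertices, so `Δ[n] ⟶ X` is a
monomorphism iff it is injective on vertices. Finally, an epimorphism `ρ` of the balanced
category `SimplexCategory` is an isomorphism iff it is injective, i.e. iff `Rₓ` is equality.
-/

namespace SSet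

variable (X : SSet) {n : ℕ} (x : X _⦋n⦌)

lemma map_const_map_eq_vertex {m : SimplexCategory} (f : m ⟶ ⦋n⦌) (i : Fin (m.len + 1)) :
    X.map (SimplexCategory.const ⦋0⦌ m i).op (X.map f.op x) = X.vertex x (f.toOrderHom i) := by
  rw [← Functor.map_comp_apply]
  rfl

lemma mono_yonedaEquiv_symm_iff_injective_vertex :
    Mono (yonedaEquiv.symm x) ↔ Function.Injective (X.vertex x) := by
  simp only [NatTrans.mono_iff_mono_app, mono_iff_injective]
  constructor
  · intro hmono i j hij
    have hconst : SimplexCategory.const ⦋0⦌ ⦋n⦌ i = SimplexCategory.const ⦋0⦌ ⦋n⦌ j :=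
      stdSimplex.objEquiv.symm.injective (hmono (Opposite.op ⦋0⦌) hij)
    simpa using congrArg (fun f => f.toOrderHom 0) hconst
  · intro hinj m g h hgh
    refine stdSimplex.objEquiv.injective (SimplexCategory.Hom.ext_iff.2 (OrderHom.ext _ _ ?_))
    funext k
    apply hinj
    rw [← map_const_map_eq_vertex, ← map_const_map_eq_vertex]
    exact congrArg _ hgh

variable {X x}

lemma approxRel_of_le_of_vertex_eq {i k : Fin (n + 1)} (hik : i ≤ k)
    (h : X.vertex x i = X.vertex x k) : X.approxRel x i k :=
  ⟨k, hik, le_rfl, h⟩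

lemma eq_of_approxRel (hinj : Function.Injective (X.vertex x)) {i k : Fin (n + 1)}
    (h : X.approxRel x i k) : i = k := by
  obtain ⟨j, hik, hkj, hij⟩ := h
  exact le_antisymm hik (hinj hij ▸ hkj)

variable (X x)

lemma vertexRel_iff_eq_iff_injective_vertex :
    (∀ i j, X.vertexRel x i j ↔ i = j) ↔ Function.Injective (X.vertex x) := by
  constructor
  · intro hR i j hij
    rcases le_total i j with hle | hle
    · exact (hR i j).1 (.rel _ _ (approxRel_of_le_of_vertex_eq hle hij))
    · exact ((hR j i).1 (.rel _ _ (approxRel_of_le_of_vertex_eq hle hij.symm))).symm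
  · intro hinj i j
    refine ⟨fun h => ?_, fun e => e ▸ .refl i⟩
    exact eq_equivalence.eqvGen_iff.1
      (Relation.EqvGen.mono (fun _ _ => eq_of_approxRel hinj) i j h)

end SSet

/-- `Rₓ` is the equality relation iff the vertices of `x` are pairwise distinct;
consequently any enforcer of `x` is an isomorphism iff the representing map of `x`
is a monomorphism. -/
theorem vertexRel_eq_iff_embedded (X : SSet) {n : ℕ} (x : X _⦋n⦌) :
    ((∀ i j, X.vertexRel x i j ↔ i = j) ↔ Function.Injective (X.vertex x)) ∧
    ∀ (m : ℕ) (ρ : (⦋n⦌ : SimplexCategory) ⟶ ⦋m⦌), Epi ρ →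
      (∀ i j, ρ.toOrderHom i = ρ.toOrderHom j ↔ X.vertexRel x i j) →
      (IsIso ρ ↔ Mono ((SSet.yonedaEquiv (X := X) (n := ⦋n⦌)).symm x)) := by
  have hR := vertexRel_iff_eq_iff_injective_vertex X x
  refine ⟨hR, fun m ρ hepi hρ => ?_⟩
  rw [isIso_iff_mono_and_epi, and_iff_left hepi, SimplexCategory.mono_iff_injective,
    mono_yonedaEquiv_symm_iff_injective_vertex, ← hR]
  simp only [Function.Injective, hρ]
  exact ⟨fun h i j => ⟨fun hij => h hij, fun e => e ▸ .refl i⟩, fun h i j => (h i j).1⟩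
end
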